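/- arXiv:2104.09368 — 2 statements merged into one kernel-verified Lean document; each statement's English description precedes it below -/
import Mathlib

section
/- Let β ∈ (0,1), π* > 1, R* = π*/β > 1, A > 1, and define g(π) = π/β − 1 − (R*−1)(π/π*)^(AR*/(R*−1)) on (0, π*). Then there exists π_L ∈ (0, π*) with g(π_L) = 0; that is, a second steady state of inflation below the target exists. -/
/-!
At the target `π*` the Fisher line `π ↦ π / β` meets the Taylor rule `π ↦ 1 + (R* - 1) (π / π*) ^ k`,
and there the rule is steeper: its slope is `A / β > 1 / β`. So the gap between the two curves is
positive just below `π*`, while it is negative for `π < β`, where the Fisher line lies below `1` and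
the rule above it. The intermediate value theorem gives a zero in between.
-/

open Filter Topology Set

theorem HasDerivAt.eventually_lt_left {f : ℝ → ℝ} {f' b : ℝ} (hf : HasDerivAt f f' b)
    (hf' : f' < 0) : ∀ᶠ x in 𝓝[<] b, f b < f x := by
  have hslope := (hasDerivAt_iff_tendsto_slope_left_right.mp hf).1
  filter_upwards [hslope.eventually (eventually_lt_nhds hf'), self_mem_nhdsWithin]
    with x hx hxb
  rw [slope_comm] at hx
  exact (slope_neg_iff_of_le (le_of_lt hxb)).mp hx

theorem exists_mem_Ioo_eq_zero_of_hasDerivAt_neg {f : ℝ → ℝ} {a b f' : ℝ} (hab : a < b)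
    (hf : ContinuousOn f (Icc a b)) (ha : f a < 0) (hb : f b = 0) (hf' : HasDerivAt f f' b)
    (hneg : f' < 0) : ∃ c ∈ Ioo a b, f c = 0 := by
  obtain ⟨x, hfx, hx⟩ := ((hf'.eventually_lt_left hneg).and (Ioo_mem_nhdsLT hab)).exists
  rw [hb] at hfx
  obtain ⟨c, hc, hfc⟩ := intermediate_value_Ioo hx.1.le (hf.mono (Icc_subset_Icc_right hx.2.le))
    ⟨ha, hfx⟩
  exact ⟨c, ⟨hc.1, hc.2.trans hx.2⟩, hfc⟩

noncomputable def fisherTaylorGap (β πs Rs k π : ℝ) : ℝ := π / β - 1 - (Rs - 1) * (π / πs) ^ k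

theorem fisherTaylorGap_self {β πs Rs : ℝ} (hRs : Rs = πs / β) (hπs : πs ≠ 0) (k : ℝ) :
    fisherTaylorGap β πs Rs k πs = 0 := by
  simp [fisherTaylorGap, div_self hπs, hRs]

theorem fisherTaylorGap_neg {β πs Rs k π : ℝ} (hβ : 0 < β) (hRs : 1 ≤ Rs) (hπ : 0 ≤ π)
    (hπβ : π < β) (hπs : 0 ≤ πs) : fisherTaylorGap β πs Rs k π < 0 := by
  have : 0 ≤ (Rs - 1) * (π / πs) ^ k :=
    mul_nonneg (sub_nonneg.mpr hRs) (Real.rpow_nonneg (div_nonneg hπ hπs) k)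
  have : π / β < 1 := (div_lt_one hβ).mpr hπβ
  unfold fisherTaylorGap
  linarith

theorem continuous_fisherTaylorGap (β πs Rs : ℝ) {k : ℝ} (hk : 0 ≤ k) :
    Continuous (fisherTaylorGap β πs Rs k) := by
  unfold fisherTaylorGap
  fun_prop (disch := intro; exact Or.inr hk)

theorem hasDerivAt_fisherTaylorGap_self (β Rs k : ℝ) {πs : ℝ} (hπs : πs ≠ 0) :
    HasDerivAt (fisherTaylorGap β πs Rs k) (1 / β - (Rs - 1) * (k / πs)) πs := by
  have hpow : HasDerivAt (fun π ↦ (π / πs) ^ k) (k / πs) πs := by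
    simpa [div_self hπs, div_eq_inv_mul, mul_comm] using
      ((hasDerivAt_id πs).div_const πs).rpow_const (p := k) (by simp [hπs])
  exact (((hasDerivAt_id πs).div_const β).sub_const 1).sub (hpow.const_mul (Rs - 1))

theorem low_inflation_steady_state_exists_general
    (β πs A Rs : ℝ) (hβ : β ∈ Set.Ioo (0:ℝ) 1) (hA : 1 < A)
    (hRs : Rs = πs / β) (hRs1 : 1 < Rs)
    (g : ℝ → ℝ)
    (hg : ∀ π : ℝ, g π = π / β - 1 - (Rs - 1) * (π / πs) ^ (A * Rs / (Rs - 1))) :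
    ∃ πL ∈ Set.Ioo (0:ℝ) πs, g πL = 0 := by
  obtain ⟨hβ0, -⟩ := hβ
  set k := A * Rs / (Rs - 1)
  have hgap : g = fisherTaylorGap β πs Rs k := funext hg
  have hπs : 0 < πs := (div_pos_iff_of_pos_right hβ0).mp (hRs ▸ by linarith)
  have hk : 0 ≤ k := by unfold k; exact div_nonneg (by positivity) (by linarith)
  have hslope : 1 / β - (Rs - 1) * (k / πs) < 0 := by
    have : (Rs - 1) * (k / πs) = A / β := by
      unfold k; field_simp [(sub_pos.mpr hRs1).ne']; rw [hRs]; field_simp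
    rw [this, ← sub_div]
    exact div_neg_of_neg_of_pos (by linarith) hβ0
  set a := min β πs / 2
  have ha : 0 < a := by positivity
  have haβ : a < β := by unfold a; linarith [min_le_left β πs]
  have haπs : a < πs := by unfold a; linarith [min_le_right β πs]
  obtain ⟨πL, hπL, hgπL⟩ := exists_mem_Ioo_eq_zero_of_hasDerivAt_neg haπs
    (continuous_fisherTaylorGap β πs Rs hk).continuousOn
    (fisherTaylorGap_neg hβ0 hRs1.le ha.le haβ hπs.le) (fisherTaylorGap_self hRs hπs.ne' k)
    (hasDerivAt_fisherTaylorGap_self β Rs k hπs.ne') hslope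
  exact ⟨πL, Ioo_subset_Ioo_left ha.le hπL, hgap ▸ hgπL⟩

/-- Existence of a second, low-inflation steady state `π_L ∈ (0, π*)`. -/
theorem low_inflation_steady_state_exists
    (β πs A Rs : ℝ) (hβ : β ∈ Set.Ioo (0:ℝ) 1) (hπs : 1 < πs) (hA : 1 < A)
    (hRs : Rs = πs / β) (hRs1 : 1 < Rs)
    (g : ℝ → ℝ)
    (hg : ∀ π : ℝ, g π = π / β - 1 - (Rs - 1) * (π / πs) ^ (A * Rs / (Rs - 1))) :
    ∃ πL ∈ Set.Ioo (0:ℝ) πs, g πL = 0 :=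
  low_inflation_steady_state_exists_general β πs A Rs hβ hA hRs hRs1 g hg
end

section
/- With β ∈ (0,1), π* > 1, R* = π*/β, A > 1, k = AR*/(R*−1), and f(π) = (R*−1)(π/π*)^k: if π_L ∈ (0, π*) satisfies the steady state condition π_L/β = 1 + f(π_L), then f'(π_L) < 1/β; i.e., the Taylor rule is passive at the low-inflation steady state. -/
/-!
With `R* = π*/β`, the point `π*` is itself a steady state: `f π* = R* - 1 = π*/β - 1`. Since
`k > 1`, `f` is strictly convex on `[0, ∞)`, so at the left one of two points where its graph
meets the line `π ↦ π/β - 1` its derivative is strictly smaller than the slope `1/β` of that line.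
-/

open Set

theorem StrictConvexOn.const_mul {s : Set ℝ} {g : ℝ → ℝ} (hg : StrictConvexOn ℝ s g) {c : ℝ}
    (hc : 0 < c) : StrictConvexOn ℝ s fun x => c * g x := by
  refine ⟨hg.1, fun x hx y hy hxy a b ha hb hab => ?_⟩
  have h := hg.2 hx hy hxy ha hb hab
  simp only [smul_eq_mul] at h ⊢
  nlinarith

theorem strictConvexOn_mul_div_rpow {c d p : ℝ} (hc : 0 < c) (hd : 0 < d) (hp : 1 < p) :
    StrictConvexOn ℝ (Ici 0) fun x => c * (x / d) ^ p :=
  ((strictConvexOn_rpow hp).const_mul (div_pos hc (Real.rpow_pos_of_pos hd p))).congr fun x hx => by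
    simp only [Real.div_rpow (mem_Ici.mp hx) hd.le]
    ring

theorem StrictConvexOn.deriv_lt_of_meets_line {S : Set ℝ} {f : ℝ → ℝ} {m b x y : ℝ}
    (hfc : StrictConvexOn ℝ S f) (hx : x ∈ S) (hy : y ∈ S) (hxy : x < y)
    (hfd : DifferentiableAt ℝ f x) (hfx : f x = m * x + b) (hfy : f y = m * y + b) :
    deriv f x < m := by
  have hslope : slope f x y = m := by
    rw [slope_def_field, hfx, hfy, div_eq_iff (sub_ne_zero.mpr hxy.ne')]
    ring
  exact hslope ▸ hfc.deriv_lt_slope hx hy hxy hfd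

/-- At the low-inflation steady state the Taylor rule is passive: `f'(π_L) < 1/β`. -/
theorem taylor_rule_passive_at_low_steady_state
    (β πs A Rs k : ℝ) (hβ : β ∈ Set.Ioo (0:ℝ) 1) (hπs : 1 < πs) (hA : 1 < A)
    (hRs : Rs = πs / β) (hk : k = A * Rs / (Rs - 1))
    (f : ℝ → ℝ)
    (hf : ∀ π : ℝ, f π = (Rs - 1) * (π / πs) ^ k)
    (πL : ℝ) (hπL : πL ∈ Set.Ioo (0:ℝ) πs)
    (hss : πL / β = 1 + f πL) :
    deriv f πL < 1 / β := by
  obtain ⟨hβ0, hβ1⟩ := hβ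
  have hπs0 : 0 < πs := one_pos.trans hπs
  have hRs1 : 1 < Rs := by
    rw [hRs, lt_div_iff₀ hβ0]
    linarith
  have hk1 : 1 < k := by
    rw [hk, lt_div_iff₀ (sub_pos.mpr hRs1)]
    nlinarith
  obtain rfl : f = fun π => (Rs - 1) * (π / πs) ^ k := funext hf
  have hconvex := strictConvexOn_mul_div_rpow (sub_pos.mpr hRs1) hπs0 hk1
  have hdiff : DifferentiableAt ℝ (fun π => (Rs - 1) * (π / πs) ^ k) πL :=
    ((Real.differentiable_rpow_const hk1.le).comp (differentiable_id.div_const πs)).const_mul _ πL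
  have hhigh : (Rs - 1) * (πs / πs) ^ k = 1 / β * πs + -1 := by
    rw [div_self hπs0.ne', Real.one_rpow, hRs]
    ring
  refine hconvex.deriv_lt_of_meets_line (mem_Ici.mpr hπL.1.le) (mem_Ici.mpr hπs0.le) hπL.2 hdiff
    ?_ hhigh
  beta_reduce at hss ⊢
  linear_combination -hss
end
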